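/- arXiv:2401.11096 — 4 statements merged into one kernel-verified Lean document; each statement's English description precedes it below -/
import Mathlib

section
/- Let γ < 1 and let U : (1,∞) → ℝ be measurable with s ↦ U(1/s) integrable on (0,1), and define V(x) = (1/x)∫₀ˣ U(1/s) ds for x ∈ (0,1]. Suppose there is a positive measurable function a such that for every y > 0, lim_{t→∞} (U(t/y) − U(t))/a(t) = h_γ(y), and suppose additionally that for each y₀ > 0 there exist t₀ > 1 and an integrable function g on (0, y₀] such that |(U(t/s) − U(t))/a(t)| ≤ g(s) for all t ≥ t₀ and all s ∈ (0, y₀]. Then for every y > 0, lim_{t→∞} (V(y/t) − V(1/t))/a(t) = (1/y)∫₀ʸ h_γ(w) dw − ∫₀¹ h_γ(w) dw. -/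
open MeasureTheory Set Filter

/-- The first-order limit function `h_γ`: `h_γ(y) = (y^(−γ) − 1)/γ` for `γ ≠ 0`,
`h₀(y) = −log y`. -/
noncomputable def hFun (γ y : ℝ) : ℝ := if γ = 0 then -Real.log y else (y ^ (-γ) - 1) / γ

/-- first-order extended regular variation of the CVaR function `V`,
derived from that of the tail quantile function `U` (under domination). -/
theorem first_order_ERV_of_CVaR (γ : ℝ) (hγ : γ < 1)
    (U a V : ℝ → ℝ) (hUmeas : Measurable U)
    (hUint : IntegrableOn (fun s => U (1 / s)) (Ioc (0 : ℝ) 1))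
    (hV : ∀ x ∈ Ioc (0 : ℝ) 1, V x = (1 / x) * ∫ s in Ioc (0 : ℝ) x, U (1 / s))
    (ha_pos : ∀ t, 0 < a t) (ha_meas : Measurable a)
    (hlim : ∀ y > (0 : ℝ),
      Tendsto (fun t => (U (t / y) - U t) / a t) atTop (nhds (hFun γ y)))
    (hdom : ∀ y₀ > (0 : ℝ), ∃ t₀ > (1 : ℝ), ∃ g : ℝ → ℝ,
      IntegrableOn g (Ioc (0 : ℝ) y₀) ∧
      ∀ t ≥ t₀, ∀ s ∈ Ioc (0 : ℝ) y₀, |(U (t / s) - U t) / a t| ≤ g s) :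
    ∀ y > (0 : ℝ),
      Tendsto (fun t => (V (y / t) - V (1 / t)) / a t) atTop
        (nhds ((1 / y) * (∫ w in Ioc (0 : ℝ) y, hFun γ w)
          - ∫ w in Ioc (0 : ℝ) 1, hFun γ w)) := by
  intro y hy
  set y₀ : ℝ := max y 1 with hy₀def
  have hy₀ : (0 : ℝ) < y₀ := lt_of_lt_of_le hy (le_max_left _ _)
  obtain ⟨t₀, ht₀, g, hg, hgbound⟩ := hdom y₀ hy₀
  have hFmeas : ∀ t : ℝ, Measurable fun w => (U (t / w) - U t) / a t := fun t =>
    ((hUmeas.comp (measurable_const.div measurable_id)).sub measurable_const).div_const _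
  -- dominated convergence
  have hDCT : ∀ c : ℝ, 0 < c → c ≤ y₀ →
      Tendsto (fun t => ∫ w in Ioc (0 : ℝ) c, (U (t / w) - U t) / a t) atTop
        (nhds (∫ w in Ioc (0 : ℝ) c, hFun γ w)) := by
    intro c hc hc'
    apply tendsto_integral_filter_of_dominated_convergence g
    · exact Eventually.of_forall fun t => (hFmeas t).aestronglyMeasurable
    · filter_upwards [eventually_ge_atTop t₀] with t ht
      refine (ae_restrict_iff' measurableSet_Ioc).2 (ae_of_all _ fun w hw => ?_)
      rw [Real.norm_eq_abs]
      exact hgbound t ht w ⟨hw.1, hw.2.trans hc'⟩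
    · exact hg.mono_set (Ioc_subset_Ioc_right hc')
    · refine (ae_restrict_iff' measurableSet_Ioc).2 (ae_of_all _ fun w hw => ?_)
      exact hlim w hw.1
  -- integrability of w ↦ U (t / w)
  have hFint : ∀ t ≥ t₀, ∀ c : ℝ, c ≤ y₀ →
      IntegrableOn (fun w => U (t / w)) (Ioc (0 : ℝ) c) := by
    intro t ht c hc
    have h1 : IntegrableOn (fun w => (U (t / w) - U t) / a t) (Ioc (0 : ℝ) y₀) := by
      refine Integrable.mono' hg (hFmeas t).aestronglyMeasurable ?_
      refine (ae_restrict_iff' measurableSet_Ioc).2 (ae_of_all _ fun w hw => ?_)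
      rw [Real.norm_eq_abs]; exact hgbound t ht w hw
    have h2 : IntegrableOn (fun w => U (t / w)) (Ioc (0 : ℝ) y₀) := by
      have heq : (fun w => U (t / w)) =
          fun w => ((U (t / w) - U t) / a t) * a t + U t := by
        funext w
        have hat : a t ≠ 0 := (ha_pos t).ne'
        field_simp
        ring
      rw [heq]
      exact (h1.mul_const _).add (integrableOn_const measure_Ioc_lt_top.ne)
    exact h2.mono_set (Ioc_subset_Ioc_right hc)
  -- main convergence of the two integrals
  have hmain : Tendsto (fun t => (1 / y) * (∫ w in Ioc (0 : ℝ) y, (U (t / w) - U t) / a t)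
        - ∫ w in Ioc (0 : ℝ) 1, (U (t / w) - U t) / a t) atTop
      (nhds ((1 / y) * (∫ w in Ioc (0 : ℝ) y, hFun γ w)
          - ∫ w in Ioc (0 : ℝ) 1, hFun γ w)) :=
    ((hDCT y hy (le_max_left _ _)).const_mul _).sub (hDCT 1 one_pos (le_max_right _ _))
  refine hmain.congr' ?_
  filter_upwards [eventually_ge_atTop (max t₀ y₀)] with t htt
  have htt₀ : t ≥ t₀ := le_trans (le_max_left _ _) htt
  have ht1 : (1 : ℝ) < t := lt_of_lt_of_le ht₀ htt₀
  have ht0 : (0 : ℝ) < t := lt_trans one_pos ht1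
  have hty : y₀ ≤ t := le_trans (le_max_right _ _) htt
  -- substitution formula
  have hsubst : ∀ c : ℝ, 0 < c → c ≤ y₀ →
      ∫ s in Ioc (0 : ℝ) (c / t), U (1 / s) = (1 / t) * ∫ w in Ioc (0 : ℝ) c, U (t / w) := by
    intro c hc hc'
    have key : ∫ w in (0 : ℝ)..c, U (t / w) = t • ∫ x in (0 : ℝ)..(c / t), U (1 / x) := by
      have h := intervalIntegral.integral_comp_div (a := (0 : ℝ)) (b := c)
        (f := fun s => U (1 / s)) (c := t) ht0.ne'
      simp only [one_div_div, zero_div] at h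
      exact h
    rw [intervalIntegral.integral_of_le hc.le, intervalIntegral.integral_of_le
      (by positivity : (0 : ℝ) ≤ c / t)] at key
    rw [key, smul_eq_mul]
    field_simp
  -- value of V at c / t
  have hVval : ∀ c : ℝ, 0 < c → c ≤ y₀ →
      V (c / t) = (1 / c) * ∫ w in Ioc (0 : ℝ) c, U (t / w) := by
    intro c hc hc'
    have hmem : c / t ∈ Ioc (0 : ℝ) 1 :=
      ⟨by positivity, (div_le_one ht0).2 (hc'.trans hty)⟩
    rw [hV _ hmem, hsubst c hc hc']
    field_simp
  -- split the integral of the quotient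
  have hsplit : ∀ c : ℝ, 0 < c → c ≤ y₀ →
      ∫ w in Ioc (0 : ℝ) c, (U (t / w) - U t) / a t
        = ((∫ w in Ioc (0 : ℝ) c, U (t / w)) - c * U t) / a t := by
    intro c hc hc'
    rw [integral_div, integral_sub (hFint t htt₀ c hc')
      (integrableOn_const measure_Ioc_lt_top.ne), setIntegral_const]
    simp [Real.volume_Ioc, ENNReal.toReal_ofReal hc.le, smul_eq_mul, hc.le]
  rw [hsplit y hy (le_max_left _ _), hsplit 1 one_pos (le_max_right _ _),
    hVval y hy (le_max_left _ _), hVval 1 one_pos (le_max_right _ _)]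
  have hat : a t ≠ 0 := (ha_pos t).ne'
  field_simp
  ring
end

section
/- Let γ < 1, ρ ≤ 0, and let U : (1,∞) → ℝ be measurable with s ↦ U(1/s) integrable on (0,1); define V(x) = (1/x)∫₀ˣ U(1/s) ds for x ∈ (0,1]. Suppose there are a positive measurable function a and a function A with A(t) → 0 as t → ∞ such that for every y > 0, lim_{t→∞} [ (U(t/y) − U(t))/a(t) − h_γ(y) ] / A(t) = H(y), where H is locally integrable on (0,∞); suppose additionally that for each y₀ > 0 there exist t₀ > 1 and an integrable function g on (0, y₀] such that |[(U(t/s) − U(t))/a(t) − h_γ(s)]/A(t)| ≤ g(s) for all t ≥ t₀ and all s ∈ (0, y₀]. Then for every y > 0, lim_{t→∞} [ (V(y/t) − V(1/t))/a(t) − h̃_γ(y) ] / A(t) = H̃(y), where H̃(y) := (1/y)∫₀ʸ H(x) dx − ∫₀¹ H(x) dx. -/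
open MeasureTheory Set Filter

/-- The CVaR-based first-order limit function `h̃_γ`:
`h̃_γ(y) = (y^(−γ) − 1)/(γ(1 − γ))` for `γ ≠ 0`, `h̃₀(y) = −log y`. -/
noncomputable def hTildeFun (γ y : ℝ) : ℝ :=
  if γ = 0 then -Real.log y else (y ^ (-γ) - 1) / (γ * (1 - γ))

/-! ### Auxiliary lemmas -/

lemma rpow_integrableOn_aux {γ y : ℝ} (hγ : γ < 1) (hy : 0 < y) :
    IntegrableOn (fun x : ℝ => x ^ (-γ)) (Ioc 0 y) := by
  have h : IntervalIntegrable (fun x : ℝ => x ^ (-γ)) volume 0 y :=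
    intervalIntegral.intervalIntegrable_rpow' (by linarith)
  rwa [intervalIntegrable_iff_integrableOn_Ioc_of_le hy.le] at h

lemma rpow_integral_aux {γ y : ℝ} (hγ : γ < 1) (hy : 0 < y) :
    ∫ x in Ioc (0 : ℝ) y, x ^ (-γ) = y ^ (1 - γ) / (1 - γ) := by
  rw [← intervalIntegral.integral_of_le hy.le,
    integral_rpow (Or.inl (by linarith : (-1 : ℝ) < -γ))]
  rw [Real.zero_rpow (by intro h; nlinarith [h] : (-γ + 1 : ℝ) ≠ 0)]
  ring_nf

lemma log_integrableOn_aux {y : ℝ} (hy : 0 < y) :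
    IntegrableOn Real.log (Ioc 0 y) := by
  have hbound : IntegrableOn (fun x : ℝ => 2 * x ^ (-(1/2) : ℝ) + |Real.log y|) (Ioc 0 y) := by
    apply Integrable.add
    · exact (rpow_integrableOn_aux (by norm_num : (1/2 : ℝ) < 1) hy).const_mul 2
    · exact integrableOn_const measure_Ioc_lt_top.ne
  refine hbound.mono' Real.measurable_log.aestronglyMeasurable ?_
  filter_upwards [ae_restrict_mem measurableSet_Ioc] with x hx
  rw [Real.norm_eq_abs]
  rcases le_or_gt x 1 with hx1 | hx1
  · have hlog : Real.log x ≤ 0 := Real.log_nonpos hx.1.le hx1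
    rw [abs_of_nonpos hlog]
    have hu : Real.log (x ^ (-(1/2) : ℝ)) = -(1/2) * Real.log x := Real.log_rpow hx.1 _
    have hle : Real.log (x ^ (-(1/2) : ℝ)) ≤ x ^ (-(1/2) : ℝ) :=
      (Real.log_le_sub_one_of_pos (Real.rpow_pos_of_pos hx.1 _)).trans (by linarith)
    nlinarith [abs_nonneg (Real.log y)]
  · have h1 : 0 ≤ Real.log x := Real.log_nonneg hx1.le
    have h2 : Real.log x ≤ Real.log y := Real.log_le_log hx.1 hx.2
    have h3 : (0:ℝ) ≤ 2 * x ^ (-(1/2) : ℝ) := by positivity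
    rw [abs_of_nonneg h1]
    calc Real.log x ≤ Real.log y := h2
      _ ≤ |Real.log y| := le_abs_self _
      _ ≤ 2 * x ^ (-(1/2) : ℝ) + |Real.log y| := by linarith

lemma log_integral_aux {y : ℝ} (hy : 0 < y) :
    ∫ x in Ioc (0 : ℝ) y, Real.log x = y * Real.log y - y := by
  set s : ℕ → Set ℝ := fun n => Ioc (1 / (n + 1) : ℝ) y with hs
  have hU : ⋃ n, s n = Ioc 0 y := by
    ext x
    simp only [hs, mem_iUnion, mem_Ioc]
    constructor
    · rintro ⟨n, h1, h2⟩
      exact ⟨lt_trans (by positivity) h1, h2⟩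
    · rintro ⟨h1, h2⟩
      obtain ⟨n, hn⟩ := exists_nat_one_div_lt h1
      exact ⟨n, hn, h2⟩
  have hmono : Monotone s := by
    intro m n hmn
    apply Ioc_subset_Ioc _ le_rfl
    apply one_div_le_one_div_of_le (by positivity)
    exact_mod_cast by exact_mod_cast Nat.add_le_add_right hmn 1
  have hlim := tendsto_setIntegral_of_monotone (fun n => measurableSet_Ioc) hmono
    (hU ▸ log_integrableOn_aux hy)
  rw [hU] at hlim
  -- the sequence of truncated integrals tends to `y log y - y`
  have hc : Tendsto (fun n : ℕ => (1 / (n + 1) : ℝ)) atTop (nhds 0) :=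
    tendsto_one_div_add_atTop_nhds_zero_nat
  have hcpos : ∀ n : ℕ, (0 : ℝ) < 1 / (n + 1) := fun n => by positivity
  have hclog : Tendsto (fun n : ℕ => (1 / (n + 1) : ℝ) * Real.log (1 / (n + 1))) atTop
      (nhds 0) := by
    have h := tendsto_log_mul_rpow_nhdsGT_zero (r := 1) one_pos
    have h2 : Tendsto (fun n : ℕ => (1 / (n + 1) : ℝ)) atTop (nhdsWithin 0 (Ioi 0)) :=
      tendsto_nhdsWithin_of_tendsto_nhds_of_eventually_within _ hc
        (Eventually.of_forall fun n => hcpos n)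
    refine (h.comp h2).congr fun n => ?_
    simp only [Function.comp_apply, Real.rpow_one]
    rw [mul_comm]
  have hval : ∀ᶠ n : ℕ in atTop, ∫ x in s n, Real.log x
      = y * Real.log y - (1 / (n + 1) : ℝ) * Real.log (1 / (n + 1)) - y + (1 / (n + 1)) := by
    have : ∀ᶠ n : ℕ in atTop, (1 / (n + 1) : ℝ) ≤ y := by
      obtain ⟨m, hm⟩ := exists_nat_one_div_lt hy
      filter_upwards [eventually_ge_atTop m] with n hn
      have : (1 / (n + 1) : ℝ) ≤ 1 / (m + 1) := by
        apply one_div_le_one_div_of_le (by positivity)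
        exact_mod_cast Nat.add_le_add_right hn 1
      linarith
    filter_upwards [this] with n hn
    have h0 : (0 : ℝ) ∉ uIcc (1 / (n + 1) : ℝ) y := by
      rw [Set.uIcc_of_le hn]
      rintro ⟨h0a, -⟩
      exact absurd h0a (not_le.2 (hcpos n))
    rw [hs]
    rw [← intervalIntegral.integral_of_le hn, integral_log]
  have hlim2 : Tendsto (fun n : ℕ => ∫ x in s n, Real.log x) atTop
      (nhds (y * Real.log y - y)) := by
    apply Tendsto.congr' (hval.mono fun n h => h.symm)
    have := ((tendsto_const_nhds (x := y * Real.log y)).sub hclog).sub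
      (tendsto_const_nhds (x := y)) |>.add hc
    simpa using this
  exact tendsto_nhds_unique hlim hlim2

lemma hFun_integrableOn (γ : ℝ) (hγ : γ < 1) {y : ℝ} (hy : 0 < y) :
    IntegrableOn (hFun γ) (Ioc 0 y) := by
  unfold hFun
  split_ifs with h
  · exact (log_integrableOn_aux hy).neg
  · exact ((rpow_integrableOn_aux hγ hy).sub
      (integrableOn_const measure_Ioc_lt_top.ne)).div_const γ

lemma hFun_integral (γ : ℝ) (hγ : γ < 1) {y : ℝ} (hy : 0 < y) :
    ∫ w in Ioc (0 : ℝ) y, hFun γ w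
      = if γ = 0 then y - y * Real.log y else (y ^ (1 - γ) / (1 - γ) - y) / γ := by
  have hvol : (volume (Ioc (0 : ℝ) y)).toReal = y := by
    rw [Real.volume_Ioc, ENNReal.toReal_ofReal (by linarith), sub_zero]
  unfold hFun
  split_ifs with h
  · rw [integral_neg, log_integral_aux hy]; ring
  · rw [integral_div, integral_sub (rpow_integrableOn_aux hγ hy)
      (integrableOn_const measure_Ioc_lt_top.ne),
      rpow_integral_aux hγ hy, setIntegral_const, measureReal_def, hvol, smul_eq_mul, mul_one]

lemma hTilde_eq (γ : ℝ) (hγ : γ < 1) {y : ℝ} (hy : 0 < y) :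
    hTildeFun γ y = (1 / y) * (∫ w in Ioc (0 : ℝ) y, hFun γ w)
      - ∫ w in Ioc (0 : ℝ) 1, hFun γ w := by
  rw [hFun_integral γ hγ hy, hFun_integral γ hγ one_pos]
  unfold hTildeFun
  split_ifs with h
  · simp only [Real.log_one]
    field_simp
    ring
  · have h1γ : (1 : ℝ) - γ ≠ 0 := by intro hc; nlinarith [hc]
    have hyγ : y ^ (1 - γ) = y ^ (-γ) * y := by
      rw [show (1 : ℝ) - γ = -γ + 1 by ring, Real.rpow_add hy, Real.rpow_one]
    rw [Real.one_rpow, hyγ]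
    field_simp
    ring

/-- Substitution: `∫_{(0,y]} U(t/w) dw = t ∫_{(0,y/t]} U(1/s) ds`. -/
lemma integral_scale_aux (U : ℝ → ℝ) {t : ℝ} (ht : 0 < t) {y : ℝ} (hy : 0 < y) :
    ∫ w in Ioc (0 : ℝ) y, U (t / w) = t * ∫ s in Ioc (0 : ℝ) (y / t), U (1 / s) := by
  rw [← intervalIntegral.integral_of_le hy.le,
    ← intervalIntegral.integral_of_le (by positivity : (0:ℝ) ≤ y / t)]
  have h := intervalIntegral.integral_comp_div (a := 0) (b := y) (c := t)
    (f := fun s => U (1 / s)) ht.ne'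
  simp only [zero_div, smul_eq_mul] at h
  rw [← h]
  apply intervalIntegral.integral_congr
  intro x _
  show U (t / x) = U (1 / (x / t))
  rw [one_div_div]

lemma integrableOn_scale_aux (U : ℝ → ℝ)
    (hUint : IntegrableOn (fun s => U (1 / s)) (Ioc (0 : ℝ) 1)) {t y : ℝ}
    (ht : 0 < t) (hy : 0 < y) (hyt : y ≤ t) :
    IntegrableOn (fun w => U (t / w)) (Ioc 0 y) := by
  have h1 : IntegrableOn (fun s => U (1 / s)) (Ioc 0 (y / t)) :=
    hUint.mono_set (Ioc_subset_Ioc le_rfl ((div_le_one ht).2 hyt))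
  have h2 : IntervalIntegrable (fun s => U (1 / s)) volume 0 (y / t) := by
    rwa [intervalIntegrable_iff_integrableOn_Ioc_of_le (by positivity)]
  have h3 := h2.comp_mul_right (c := t⁻¹)
  have e1 : (0 : ℝ) / t⁻¹ = 0 := by simp
  have e2 : (y / t) / t⁻¹ = y := by field_simp
  rw [e1, e2] at h3
  have h4 : IntervalIntegrable (fun w => U (t / w)) volume 0 y := by
    refine h3.congr (fun x _ => ?_)
    show U (1 / (x * t⁻¹)) = U (t / x)
    congr 1
    rw [one_div, mul_inv, inv_inv, div_eq_mul_inv, mul_comm]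
  rwa [intervalIntegrable_iff_integrableOn_Ioc_of_le hy.le] at h4

/-- second-order extended regular variation of the CVaR function `V`,
derived from that of the tail quantile function `U` (under domination), with
second-order limit function `H̃(y) = (1/y)∫₀ʸ H − ∫₀¹ H`. -/
theorem second_order_ERV_of_CVaR (γ : ℝ) (hγ : γ < 1) (ρ : ℝ) (hρ : ρ ≤ 0)
    (U a A V H : ℝ → ℝ) (hUmeas : Measurable U)
    (hUint : IntegrableOn (fun s => U (1 / s)) (Ioc (0 : ℝ) 1))
    (hV : ∀ x ∈ Ioc (0 : ℝ) 1, V x = (1 / x) * ∫ s in Ioc (0 : ℝ) x, U (1 / s))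
    (ha_pos : ∀ t, 0 < a t) (ha_meas : Measurable a)
    (hA : Tendsto A atTop (nhds 0))
    (hHint : ∀ y > (0 : ℝ), IntegrableOn H (Ioc (0 : ℝ) y))
    (hlim : ∀ y > (0 : ℝ),
      Tendsto (fun t => ((U (t / y) - U t) / a t - hFun γ y) / A t) atTop (nhds (H y)))
    (hdom : ∀ y₀ > (0 : ℝ), ∃ t₀ > (1 : ℝ), ∃ g : ℝ → ℝ,
      IntegrableOn g (Ioc (0 : ℝ) y₀) ∧
      ∀ t ≥ t₀, ∀ s ∈ Ioc (0 : ℝ) y₀, |((U (t / s) - U t) / a t - hFun γ s) / A t| ≤ g s) :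
    ∀ y > (0 : ℝ),
      Tendsto (fun t => ((V (y / t) - V (1 / t)) / a t - hTildeFun γ y) / A t) atTop
        (nhds ((1 / y) * (∫ x in Ioc (0 : ℝ) y, H x) - ∫ x in Ioc (0 : ℝ) 1, H x)) := by
  intro y hy
  set F : ℝ → ℝ → ℝ := fun t w => ((U (t / w) - U t) / a t - hFun γ w) / A t with hF
  -- Step 1: dominated convergence on each `(0, z]`
  have key : ∀ z > (0 : ℝ), Tendsto (fun t => ∫ w in Ioc (0 : ℝ) z, F t w) atTop
      (nhds (∫ w in Ioc (0 : ℝ) z, H w)) := by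
    intro z hz
    obtain ⟨t₀, ht₀, g, hg, hbound⟩ := hdom z hz
    apply tendsto_integral_filter_of_dominated_convergence g
    · apply Eventually.of_forall
      intro t
      have m2 : AEStronglyMeasurable (hFun γ) (volume.restrict (Ioc (0 : ℝ) z)) := by
        apply ContinuousOn.aestronglyMeasurable _ measurableSet_Ioc
        unfold hFun
        split_ifs with h
        · exact (Real.continuousOn_log.mono fun x hx => ne_of_gt hx.1).neg
        · apply ContinuousOn.div_const
          apply ContinuousOn.sub _ continuousOn_const
          exact fun x hx =>
            (Real.continuousAt_rpow_const x (-γ) (Or.inl (ne_of_gt hx.1))).continuousWithinAt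
      have m1 : AEStronglyMeasurable (fun w => (U (t / w) - U t) / a t)
          (volume.restrict (Ioc (0 : ℝ) z)) := by
        apply Measurable.aestronglyMeasurable
        exact ((hUmeas.comp (measurable_const.div measurable_id)).sub measurable_const).div
          measurable_const
      have m12 : AEStronglyMeasurable (fun w => ((U (t / w) - U t) / a t - hFun γ w) * (A t)⁻¹)
          (volume.restrict (Ioc (0 : ℝ) z)) := (m1.sub m2).mul_const (A t)⁻¹
      simp only [hF, div_eq_mul_inv] at m12 ⊢
      exact m12
    · filter_upwards [eventually_ge_atTop t₀] with t ht
      filter_upwards [ae_restrict_mem measurableSet_Ioc] with w hw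
      simpa [Real.norm_eq_abs] using hbound t ht w hw
    · exact hg
    · filter_upwards [ae_restrict_mem measurableSet_Ioc] with w hw
      exact hlim w hw.1
  -- Step 2: `V` at scaled points as integrals
  have hVy : ∀ z, 0 < z → ∀ t : ℝ, 0 < t → z ≤ t →
      V (z / t) = (1 / z) * ∫ w in Ioc (0 : ℝ) z, U (t / w) := by
    intro z hz t ht hzt
    have hmem : z / t ∈ Ioc (0 : ℝ) 1 := ⟨by positivity, (div_le_one ht).2 hzt⟩
    rw [hV _ hmem, integral_scale_aux U ht hz, one_div_div]
    field_simp
  -- Step 3: expanding the integral of `F t`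
  have hInt : ∀ z, 0 < z → ∀ t : ℝ, 0 < t → z ≤ t →
      ∫ w in Ioc (0 : ℝ) z, F t w
        = (((∫ w in Ioc (0 : ℝ) z, U (t / w)) - z * U t) / a t
            - ∫ w in Ioc (0 : ℝ) z, hFun γ w) / A t := by
    intro z hz t ht hzt
    have h1 : IntegrableOn (fun w => U (t / w)) (Ioc 0 z) :=
      integrableOn_scale_aux U hUint ht hz hzt
    have h2 : IntegrableOn (fun _ : ℝ => U t) (Ioc (0 : ℝ) z) :=
      integrableOn_const measure_Ioc_lt_top.ne
    have h3 := hFun_integrableOn γ hγ hz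
    have hvol : (volume (Ioc (0 : ℝ) z)).toReal = z := by
      rw [Real.volume_Ioc, ENNReal.toReal_ofReal (by linarith), sub_zero]
    have h12 : IntegrableOn (fun w => (U (t / w) - U t) / a t) (Ioc (0 : ℝ) z) :=
      (h1.sub h2).div_const (a t)
    simp only [hF]
    rw [integral_div]
    congr 1
    rw [integral_sub h12 h3]
    congr 1
    have h12' : ∫ w in Ioc (0 : ℝ) z, (U (t / w) - U t) / a t
        = (∫ w in Ioc (0 : ℝ) z, (U (t / w) - U t)) / a t := integral_div _ _
    rw [h12', integral_sub h1 h2, setIntegral_const, measureReal_def, hvol, smul_eq_mul]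
  -- Step 4: eventual equality
  have heq : ∀ᶠ t in atTop,
      ((V (y / t) - V (1 / t)) / a t - hTildeFun γ y) / A t
        = (1 / y) * (∫ w in Ioc (0 : ℝ) y, F t w) - ∫ w in Ioc (0 : ℝ) 1, F t w := by
    filter_upwards [eventually_ge_atTop (max y 1), eventually_gt_atTop (0 : ℝ)]
      with t ht htpos
    have hty : y ≤ t := le_trans (le_max_left _ _) ht
    have ht1 : (1 : ℝ) ≤ t := le_trans (le_max_right _ _) ht
    rw [hVy y hy t htpos hty, hVy 1 one_pos t htpos ht1,
      hInt y hy t htpos hty, hInt 1 one_pos t htpos ht1, hTilde_eq γ hγ hy]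
    set P := ∫ w in Ioc (0 : ℝ) y, U (t / w) with hP
    set Q := ∫ w in Ioc (0 : ℝ) 1, U (t / w) with hQ
    set R := ∫ w in Ioc (0 : ℝ) y, hFun γ w with hR
    set S := ∫ w in Ioc (0 : ℝ) 1, hFun γ w with hS
    have hyy : y⁻¹ * y = 1 := inv_mul_cancel₀ hy.ne'
    simp only [one_div, div_eq_mul_inv, one_mul, mul_one, inv_one]
    linear_combination (U t * (a t)⁻¹ * (A t)⁻¹) * hyy
  -- Conclusion
  have hfinal := ((key y hy).const_mul (1 / y)).sub (key 1 one_pos)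
  exact Tendsto.congr' (heq.mono fun t h => h.symm) hfinal
end

section
/- For all t₁, t₂ > 0, (t₁ t₂)^{−1} ∫₀^{t₁} ∫₀^{t₂} min(s, w) / (s w) dw ds = (max(t₁,t₂))^{−1} ( 2 − log(min(t₁,t₂)) + log(max(t₁,t₂)) ). -/
open MeasureTheory Set

section Aux
open Real Filter Topology

lemma integrableOn_log_Ioc (t : ℝ) (ht : 0 < t) : IntegrableOn Real.log (Ioc 0 t) := by
  have hg : IntegrableOn (fun x : ℝ => 2 * x ^ (-(1/2) : ℝ) + t) (Ioc 0 t) := by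
    apply Integrable.add
    · have : IntervalIntegrable (fun x : ℝ => x ^ (-(1/2) : ℝ)) volume 0 t :=
        intervalIntegral.intervalIntegrable_rpow' (by norm_num)
      rw [intervalIntegrable_iff_integrableOn_Ioc_of_le ht.le] at this
      exact this.const_mul 2
    · exact integrableOn_const measure_Ioc_lt_top.ne
  refine Integrable.mono hg (Real.measurable_log.aestronglyMeasurable.restrict) ?_
  filter_upwards [ae_restrict_mem measurableSet_Ioc] with x hx
  have hx0 : 0 < x := hx.1
  rw [Real.norm_eq_abs, Real.norm_eq_abs]
  rcases le_total x 1 with h1 | h1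
  · have hlog : |Real.log x| = -Real.log x := abs_of_nonpos (Real.log_nonpos hx0.le h1)
    have key : -Real.log x ≤ 2 * x ^ (-(1/2) : ℝ) := by
      have := Real.log_le_sub_one_of_pos (x := x ^ (-(1/2) : ℝ)) (Real.rpow_pos_of_pos hx0 _)
      rw [Real.log_rpow hx0] at this
      nlinarith [Real.rpow_pos_of_pos hx0 (-(1/2) : ℝ)]
    rw [hlog]
    have h2 : 0 < 2 * x ^ (-(1/2) : ℝ) + t := by positivity
    rw [abs_of_pos h2]; linarith
  · have hlog : |Real.log x| = Real.log x := abs_of_nonneg (Real.log_nonneg h1)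
    have : Real.log x ≤ x := (Real.log_le_sub_one_of_pos hx0).trans (by linarith)
    have h2 : 0 < 2 * x ^ (-(1/2) : ℝ) + t := by positivity
    rw [hlog, abs_of_pos h2]
    have : x ≤ t := hx.2
    nlinarith [Real.rpow_pos_of_pos hx0 (-(1/2) : ℝ), Real.log_le_sub_one_of_pos hx0]

lemma integral_log_Ioc (t : ℝ) (ht : 0 < t) :
    ∫ s in Ioc (0:ℝ) t, Real.log s = t * Real.log t - t := by
  have hii : IntervalIntegrable Real.log volume 0 t :=
    (intervalIntegrable_iff_integrableOn_Ioc_of_le ht.le).2 (integrableOn_log_Ioc t ht)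
  have := intervalIntegral.integral_eq_sub_of_hasDerivAt_of_tendsto (f := fun x => x * Real.log x - x)
    (f' := Real.log) ht (fun x hx => by
      exact ((Real.hasDerivAt_mul_log hx.1.ne').sub (hasDerivAt_id' x)).congr_deriv (by ring)) hii
    (fa := 0) (fb := t * Real.log t - t)
    (by
      have h1 : Tendsto (fun x : ℝ => x * Real.log x) (𝓝[>] 0) (𝓝 0) := by
        have := (Real.continuous_mul_log.tendsto 0).mono_left (nhdsWithin_le_nhds (s := Ioi 0))
        simpa using this
      have h2 : Tendsto (fun x : ℝ => x) (𝓝[>] (0:ℝ)) (𝓝 0) :=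
        tendsto_nhdsWithin_of_tendsto_nhds tendsto_id
      simpa using h1.sub h2)
    (by
      have hc : ContinuousAt (fun x : ℝ => x * Real.log x - x) t :=
        ((continuousAt_id.mul (Real.continuousAt_log ht.ne')).sub continuousAt_id)
      exact hc.continuousWithinAt.tendsto)
  rw [← intervalIntegral.integral_of_le ht.le, this, sub_zero]

lemma inner_le (s b : ℝ) (hs : 0 < s) (hsb : s ≤ b) :
    ∫ w in Ioc (0:ℝ) b, min s w / (s * w) = 1 + Real.log b - Real.log s := by
  have hsplit : Ioc (0:ℝ) b = Ioc 0 s ∪ Ioc s b := (Ioc_union_Ioc_eq_Ioc hs.le hsb).symm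
  have e1 : EqOn (fun w : ℝ => min s w / (s * w)) (fun _ => s⁻¹) (Ioc 0 s) := by
    intro w hw
    simp only [min_eq_right hw.2]
    field_simp [hw.1.ne', hs.ne']
  have e2 : EqOn (fun w : ℝ => min s w / (s * w)) (fun w => w⁻¹) (Ioc s b) := by
    intro w hw
    have hw0 : 0 < w := hs.trans hw.1
    simp only [min_eq_left hw.1.le]
    field_simp [hw0.ne', hs.ne']
  have hi1 : IntegrableOn (fun w : ℝ => min s w / (s * w)) (Ioc 0 s) := by
    rw [integrableOn_congr_fun e1 measurableSet_Ioc]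
    exact integrableOn_const measure_Ioc_lt_top.ne
  have hi2 : IntegrableOn (fun w : ℝ => min s w / (s * w)) (Ioc s b) := by
    rw [integrableOn_congr_fun e2 measurableSet_Ioc]
    have hii : IntervalIntegrable (fun w : ℝ => w⁻¹) volume s b := by
      apply intervalIntegral.intervalIntegrable_inv (f := fun x => x) ?_ continuousOn_id
      intro x hx
      rw [uIcc_of_le hsb] at hx
      exact (hs.trans_le hx.1).ne'
    rw [intervalIntegrable_iff_integrableOn_Ioc_of_le hsb] at hii
    exact hii
  rw [hsplit, setIntegral_union (Ioc_disjoint_Ioc_of_le le_rfl) measurableSet_Ioc hi1 hi2]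
  have v1 : ∫ w in Ioc (0:ℝ) s, min s w / (s * w) = 1 := by
    rw [setIntegral_congr_fun measurableSet_Ioc e1, setIntegral_const]
    simp [Real.volume_Ioc, hs.le, hs.ne']
  have v2 : ∫ w in Ioc s b, min s w / (s * w) = Real.log b - Real.log s := by
    rw [setIntegral_congr_fun measurableSet_Ioc e2, ← intervalIntegral.integral_of_le hsb,
      integral_inv (by
        intro h
        rcases Set.mem_uIcc.1 h with ⟨h1, h2⟩ | ⟨h1, h2⟩
        · exact absurd h1 (not_le.2 hs)
        · linarith), Real.log_div (by linarith : b ≠ 0) hs.ne']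
  rw [v1, v2]; ring

lemma inner_gt (s b : ℝ) (hb : 0 < b) (hbs : b < s) :
    ∫ w in Ioc (0:ℝ) b, min s w / (s * w) = b / s := by
  have e1 : EqOn (fun w : ℝ => min s w / (s * w)) (fun _ => s⁻¹) (Ioc 0 b) := by
    intro w hw
    simp only [min_eq_right (hw.2.trans hbs.le)]
    rw [mul_comm s w, div_mul_eq_div_div, div_self hw.1.ne', one_div]
  rw [setIntegral_congr_fun measurableSet_Ioc e1, setIntegral_const]
  simp [Real.volume_Ioc, hb.le, div_eq_mul_inv]


lemma outer_piece1 (a b : ℝ) (ha : 0 < a) (hab : a ≤ b) :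
    ∫ s in Ioc (0:ℝ) a, ∫ w in Ioc (0:ℝ) b, min s w / (s * w)
      = a * (2 + Real.log b - Real.log a) := by
  have e : EqOn (fun s : ℝ => ∫ w in Ioc (0:ℝ) b, min s w / (s * w))
      (fun s => (1 + Real.log b) - Real.log s) (Ioc 0 a) := by
    intro s hs
    simpa [sub_eq_add_neg, add_assoc] using inner_le s b hs.1 (hs.2.trans hab)
  rw [setIntegral_congr_fun measurableSet_Ioc e,
    integral_sub (μ := volume.restrict (Ioc (0:ℝ) a)) (show IntegrableOn (fun _ : ℝ => 1 + Real.log b) (Ioc 0 a) volume from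
      integrableOn_const measure_Ioc_lt_top.ne) (integrableOn_log_Ioc a ha),
    setIntegral_const, integral_log_Ioc a ha]
  simp [Real.volume_Ioc, ha.le]
  ring

lemma outer_piece2 (a b : ℝ) (hb : 0 < b) (hba : b ≤ a) :
    ∫ s in Ioc b a, ∫ w in Ioc (0:ℝ) b, min s w / (s * w)
      = b * (Real.log a - Real.log b) := by
  have e : EqOn (fun s : ℝ => ∫ w in Ioc (0:ℝ) b, min s w / (s * w))
      (fun s => b * s⁻¹) (Ioc b a) := by
    intro s hs
    dsimp only
    rw [inner_gt s b hb hs.1, div_eq_mul_inv]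
  rw [setIntegral_congr_fun measurableSet_Ioc e, integral_const_mul,
    ← intervalIntegral.integral_of_le hba, integral_inv (by
      intro h
      rw [uIcc_of_le hba] at h
      exact absurd h.1 (not_le.2 hb)), Real.log_div (by linarith : a ≠ 0) hb.ne']

lemma double_int (a b : ℝ) (ha : 0 < a) (hb : 0 < b) (hba : b ≤ a) :
    ∫ s in Ioc (0:ℝ) a, ∫ w in Ioc (0:ℝ) b, min s w / (s * w)
      = 2 * b + b * Real.log a - b * Real.log b := by
  have hsplit : Ioc (0:ℝ) a = Ioc 0 b ∪ Ioc b a := (Ioc_union_Ioc_eq_Ioc hb.le hba).symm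
  have hi1 : IntegrableOn (fun s : ℝ => ∫ w in Ioc (0:ℝ) b, min s w / (s * w)) (Ioc 0 b) := by
    have e : EqOn (fun s : ℝ => ∫ w in Ioc (0:ℝ) b, min s w / (s * w))
        (fun s => (1 + Real.log b) - Real.log s) (Ioc 0 b) := by
      intro s hs
      simpa [sub_eq_add_neg, add_assoc] using inner_le s b hs.1 hs.2
    rw [integrableOn_congr_fun e measurableSet_Ioc]
    exact (integrableOn_const measure_Ioc_lt_top.ne).sub (integrableOn_log_Ioc b hb)
  have hi2 : IntegrableOn (fun s : ℝ => ∫ w in Ioc (0:ℝ) b, min s w / (s * w)) (Ioc b a) := by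
    have e : EqOn (fun s : ℝ => ∫ w in Ioc (0:ℝ) b, min s w / (s * w))
        (fun s => b * s⁻¹) (Ioc b a) := by
      intro s hs
      dsimp only
      rw [inner_gt s b hb hs.1, div_eq_mul_inv]
    rw [integrableOn_congr_fun e measurableSet_Ioc]
    have hii : IntervalIntegrable (fun s : ℝ => b * s⁻¹) volume b a := by
      apply IntervalIntegrable.const_mul
      apply intervalIntegral.intervalIntegrable_inv (f := fun x => x) ?_ continuousOn_id
      intro x hx
      rw [uIcc_of_le hba] at hx
      exact (hb.trans_le hx.1).ne'
    rw [intervalIntegrable_iff_integrableOn_Ioc_of_le hba] at hii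
    exact hii
  rw [hsplit, setIntegral_union (Ioc_disjoint_Ioc_of_le le_rfl) measurableSet_Ioc hi1 hi2,
    outer_piece1 b b hb le_rfl, outer_piece2 a b hb hba]
  ring

end Aux

/-- For all `t₁, t₂ > 0`,
`(t₁t₂)^(−1) ∫₀^{t₁} ∫₀^{t₂} min(s,w)/(s w) dw ds
  = (max t₁ t₂)^(−1) (2 − log(min t₁ t₂) + log(max t₁ t₂))`. -/
theorem cvar_limit_process_covariance_gamma_zero (t₁ t₂ : ℝ) (ht₁ : 0 < t₁) (ht₂ : 0 < t₂) :
    (t₁ * t₂)⁻¹ * (∫ s in Ioc (0 : ℝ) t₁, ∫ w in Ioc (0 : ℝ) t₂, min s w / (s * w))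
      = (max t₁ t₂)⁻¹ * (2 - Real.log (min t₁ t₂) + Real.log (max t₁ t₂)) := by
  rcases le_total t₁ t₂ with h | h
  · rw [outer_piece1 t₁ t₂ ht₁ h, max_eq_right h, min_eq_left h]
    field_simp
    ring
  · rw [double_int t₁ t₂ ht₁ ht₂ h, max_eq_left h, min_eq_right h]
    field_simp
    ring
end

section
/- Let γ < 1, let V : (0, x₀) → ℝ (for some x₀ > 0), let a be a positive function, let A be a function with A(t) → 0 and A(t) ≠ 0 for all large t, and let H̃ : (0,∞) → ℝ. Suppose that for every y > 0, lim_{t→∞} [ (V(y/t) − V(1/t))/a(t) − h̃_γ(y) ] / A(t) = H̃(y), where h̃_γ(y) = (y^{−γ} − 1)/(γ(1 − γ)) for γ ≠ 0 and h̃₀(y) = −log y. Then for all u, v > 0, lim_{t→∞} [ V(1/t) − V(u/t) − v^{γ}( V(v/t) − V(uv/t) ) ] / ( a(t) A(t) ) = v^{γ}( H̃(uv) − H̃(v) ) − H̃(u). In particular, the first-order terms cancel: h̃_γ(u) + v^{γ} h̃_γ(v) − v^{γ} h̃_γ(uv) = 0 for all u, v > 0. -/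
open MeasureTheory Set Filter

lemma hTilde_cancel (γ : ℝ) (hγ : γ < 1) (u v : ℝ) (hu : 0 < u) (hv : 0 < v) :
    hTildeFun γ u + v ^ γ * hTildeFun γ v - v ^ γ * hTildeFun γ (u * v) = 0 := by
  unfold hTildeFun
  by_cases h0 : γ = 0
  · subst h0
    simp [Real.log_mul hu.ne' hv.ne']
    ring
  · rw [if_neg h0, if_neg h0, if_neg h0,
      Real.mul_rpow hu.le hv.le]
    have hvv : v ^ γ * v ^ (-γ) = 1 := by
      rw [← Real.rpow_add hv]; simp
    have hden : γ * (1 - γ) ≠ 0 := by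
      have : (1:ℝ) - γ ≠ 0 := by linarith
      exact mul_ne_zero h0 this
    field_simp
    linear_combination ((1 - γ)⁻¹ * (1 - u ^ (-γ))) * hvv

/-- under second-order extended regular variation of the CVaR function
`V` with limit `H̃`, the bias combination
`V(1/t) − V(u/t) − v^γ(V(v/t) − V(uv/t))`, normalized by `a(t)A(t)`, converges to
`v^γ(H̃(uv) − H̃(v)) − H̃(u)`; in particular the first-order terms cancel. -/
theorem cvar_second_order_bias (γ : ℝ) (hγ : γ < 1)
    (x₀ : ℝ) (hx₀ : 0 < x₀) (V a A : ℝ → ℝ) (Htilde : ℝ → ℝ)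
    (ha_pos : ∀ t, 0 < a t)
    (hA0 : Tendsto A atTop (nhds 0)) (hAne : ∀ᶠ t in atTop, A t ≠ 0)
    (hV : ∀ y > (0 : ℝ),
      Tendsto (fun t => ((V (y / t) - V (1 / t)) / a t - hTildeFun γ y) / A t)
        atTop (nhds (Htilde y))) :
    ∀ u > (0 : ℝ), ∀ v > (0 : ℝ),
      (Tendsto
        (fun t => (V (1 / t) - V (u / t) - v ^ γ * (V (v / t) - V (u * v / t)))
          / (a t * A t))
        atTop (nhds (v ^ γ * (Htilde (u * v) - Htilde v) - Htilde u))) ∧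
      hTildeFun γ u + v ^ γ * hTildeFun γ v - v ^ γ * hTildeFun γ (u * v) = 0 := by
  intro u hu v hv
  have hcancel := hTilde_cancel γ hγ u v hu hv
  refine ⟨?_, hcancel⟩
  have huv : 0 < u * v := mul_pos hu hv
  have hlim : Tendsto
      (fun t => v ^ γ *
        (((V (u * v / t) - V (1 / t)) / a t - hTildeFun γ (u * v)) / A t
          - ((V (v / t) - V (1 / t)) / a t - hTildeFun γ v) / A t)
        - ((V (u / t) - V (1 / t)) / a t - hTildeFun γ u) / A t)
      atTop (nhds (v ^ γ * (Htilde (u * v) - Htilde v) - Htilde u)) :=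
    (((hV (u*v) huv).sub (hV v hv)).const_mul _).sub (hV u hu)
  refine hlim.congr' ?_
  filter_upwards [hAne] with t hA
  have ha : a t ≠ 0 := (ha_pos t).ne'
  have key : v ^ γ * hTildeFun γ (u * v) - v ^ γ * hTildeFun γ v - hTildeFun γ u = 0 := by
    linarith
  field_simp
  linear_combination (-(a t)) * key
end
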